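/- With the notation above, there is a constant c > 0 such that the Lebesgue measure of the interval I_n = {φ = n} ⊂ (1/2,1] satisfies |I_n| ∼ c/n^{β+1} as n → ∞, where β = 1/α. -/

import Mathlib

open Set MeasureTheory Filter Topology Function

/-!
Let `w n` be the point of `(0, 1]` sent to `1` by `n` applications of the left branch
`g x = x (1 + (2x)^α)`, so that `w 1 = 1/2` and `g` maps `(w (k+2), w (k+1)]` onto
`(w (k+1), w k]`. A point `y ∈ (1/2, 1]` with `2y - 1 ∈ (w (k+1), w k]` therefore returns
after exactly `k + 1` steps, so `I_{k+1}` is an interval of length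
`(w k - w (k+1)) / 2 = 2^α w (k+1)^(1+α) / 2`. Writing `w k = g (w (k+1))` and expanding
`(1 + t)^(-α)` at `t = 0` gives `w (k+1)^(-α) - w k^(-α) → α 2^α`, so by Cesàro
`w n ~ (α 2^α n)^(-1/α)`, which yields the constant `c`.
-/

/-- The left branch of the Liverani–Saussol–Vaienti map, with `2 ^ α` replaced by `a`. -/
noncomputable def lsvBranch (a α x : ℝ) : ℝ := x * (1 + a * x ^ α)

section lsvBranch

variable {a α : ℝ}

theorem lsvBranch_zero : lsvBranch a α 0 = 0 := zero_mul _

theorem lt_lsvBranch (ha : 0 < a) {x : ℝ} (hx : 0 < x) : x < lsvBranch a α x := by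
  have : 0 < a * x ^ α := by positivity
  unfold lsvBranch; nlinarith

theorem continuous_lsvBranch (hα : 0 < α) : Continuous (lsvBranch a α) := by
  have := Real.continuous_rpow_const hα.le
  unfold lsvBranch; fun_prop

theorem strictMonoOn_lsvBranch (ha : 0 < a) (hα : 0 < α) :
    StrictMonoOn (lsvBranch a α) (Ici 0) := by
  intro x hx y hy hxy
  have hxy' : x ^ α < y ^ α := Real.rpow_lt_rpow hx hxy hα
  have : 0 ≤ x ^ α := Real.rpow_nonneg hx _
  calc x * (1 + a * x ^ α) < y * (1 + a * x ^ α) := by gcongr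
    _ ≤ y * (1 + a * y ^ α) := by gcongr

theorem surjOn_lsvBranch (ha : 0 < a) (hα : 0 < α) : SurjOn (lsvBranch a α) (Ioi 0) (Ioi 0) := by
  intro t ht
  obtain ⟨x, hx, hxt⟩ := intermediate_value_Ioo (le_of_lt ht)
    (continuous_lsvBranch (a := a) hα).continuousOn
    (show t ∈ Ioo (lsvBranch a α 0) (lsvBranch a α t) from
      ⟨lsvBranch_zero.symm ▸ ht, lt_lsvBranch ha ht⟩)
  exact ⟨x, hx.1, hxt⟩

theorem tendsto_one_sub_one_add_rpow_neg_div (α : ℝ) :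
    Tendsto (fun t : ℝ => (1 - (1 + t) ^ (-α)) / t) (𝓝[≠] 0) (𝓝 α) := by
  have hd : HasDerivAt (fun s : ℝ => -s ^ (-α)) (-(-α * 1 ^ (-α - 1))) 1 :=
    (Real.hasDerivAt_rpow_const (Or.inl one_ne_zero)).neg
  rw [Real.one_rpow, mul_one, neg_neg] at hd
  refine hd.tendsto_slope_zero.congr fun t => ?_
  simp only [Real.one_rpow, smul_eq_mul]
  ring

end lsvBranch

noncomputable def preimageSeq {X : Type*} [Nonempty X] (g : X → X) (s : Set X) (x₀ : X) :
    ℕ → X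
  | 0 => x₀
  | n + 1 => invFunOn g s (preimageSeq g s x₀ n)

section preimageSeq

variable {X : Type*} [Nonempty X] {g : X → X} {s : Set X} {x₀ : X}

theorem preimageSeq_mem (hg : SurjOn g s s) (hx₀ : x₀ ∈ s) :
    ∀ n, preimageSeq g s x₀ n ∈ s
  | 0 => hx₀
  | n + 1 => invFunOn_mem (hg (preimageSeq_mem hg hx₀ n))

theorem apply_preimageSeq_succ (hg : SurjOn g s s) (hx₀ : x₀ ∈ s) (n : ℕ) :
    g (preimageSeq g s x₀ (n + 1)) = preimageSeq g s x₀ n :=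
  invFunOn_eq (hg (preimageSeq_mem hg hx₀ n))

end preimageSeq

section Asymptotics

variable {a α : ℝ} {w : ℕ → ℝ}

theorem tendsto_zero_of_lsvBranch_succ (ha : 0 < a) (hα : 0 < α) (hw : ∀ n, 0 < w n)
    (hrec : ∀ n, lsvBranch a α (w (n + 1)) = w n) : Tendsto w atTop (𝓝 0) := by
  have hanti : Antitone w := antitone_nat_of_succ_le fun n => by
    rw [← hrec n]; exact (lt_lsvBranch ha (hw (n + 1))).le
  have hbdd : BddBelow (range w) := ⟨0, by rintro _ ⟨n, rfl⟩; exact (hw n).le⟩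
  have hlim := tendsto_atTop_ciInf hanti hbdd
  set l := ⨅ n, w n
  have hl : lsvBranch a α l = l := by
    refine tendsto_nhds_unique (((continuous_lsvBranch hα).tendsto l).comp
      ((tendsto_add_atTop_iff_nat 1).mpr hlim)) ?_
    simpa only [comp_def, hrec] using hlim
  have hl0 : l = 0 := by
    refine ((le_ciInf fun n => (hw n).le).eq_or_lt.resolve_right fun hl0 => ?_).symm
    exact (lt_lsvBranch ha hl0).ne' hl
  rwa [hl0] at hlim

theorem tendsto_rpow_neg_succ_sub (ha : 0 < a) (hα : 0 < α) (hw : ∀ n, 0 < w n)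
    (hrec : ∀ n, lsvBranch a α (w (n + 1)) = w n) :
    Tendsto (fun n => w (n + 1) ^ (-α) - w n ^ (-α)) atTop (𝓝 (a * α)) := by
  have ht : Tendsto (fun n => a * w (n + 1) ^ α) atTop (𝓝[≠] 0) := by
    refine tendsto_nhdsWithin_of_tendsto_nhds_of_eventually_within _ ?_
      (Eventually.of_forall fun n => (mul_pos ha (Real.rpow_pos_of_pos (hw (n + 1)) α)).ne')
    have := ((Real.continuous_rpow_const hα.le).tendsto 0).comp
      ((tendsto_add_atTop_iff_nat 1).mpr (tendsto_zero_of_lsvBranch_succ ha hα hw hrec))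
    simpa [Real.zero_rpow hα.ne'] using this.const_mul a
  refine ((tendsto_one_sub_one_add_rpow_neg_div α).comp ht).const_mul a |>.congr fun n => ?_
  -- with `t = a w (n+1)^α`: `w n^(-α) = w (n+1)^(-α) (1 + t)^(-α)` and `w (n+1)^(-α) = a / t`
  have hw1 := hw (n + 1)
  have hinv : w (n + 1) ^ (-α) = a / (a * w (n + 1) ^ α) := by
    rw [Real.rpow_neg hw1.le]; field_simp
  rw [← hrec n, lsvBranch, Real.mul_rpow hw1.le (by positivity), hinv]
  simp only [comp_apply]
  field_simp

theorem tendsto_rpow_neg_div_natCast (ha : 0 < a) (hα : 0 < α) (hw : ∀ n, 0 < w n)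
    (hrec : ∀ n, lsvBranch a α (w (n + 1)) = w n) :
    Tendsto (fun n : ℕ => w n ^ (-α) / n) atTop (𝓝 (a * α)) := by
  have hmean := (tendsto_rpow_neg_succ_sub ha hα hw hrec).cesaro
  simp only [Finset.sum_range_sub (fun n => w n ^ (-α))] at hmean
  have hv0 : Tendsto (fun n : ℕ => (n : ℝ)⁻¹ * w 0 ^ (-α)) atTop (𝓝 0) := by
    simpa using tendsto_inv_atTop_nhds_zero_nat.mul_const (w 0 ^ (-α))
  simpa [div_eq_inv_mul, mul_sub] using hmean.add hv0

theorem tendsto_mul_rpow_inv (ha : 0 < a) (hα : 0 < α) (hw : ∀ n, 0 < w n)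
    (hrec : ∀ n, lsvBranch a α (w (n + 1)) = w n) :
    Tendsto (fun n : ℕ => w n * (n : ℝ) ^ (1 / α)) atTop (𝓝 ((a * α) ^ (-(1 / α)))) := by
  refine ((Real.continuousAt_rpow_const _ _ (Or.inl (by positivity))).tendsto.comp
    (tendsto_rpow_neg_div_natCast ha hα hw hrec)).congr' ?_
  filter_upwards [eventually_gt_atTop 0] with n hn
  have hn : (0 : ℝ) < n := by exact_mod_cast hn
  have hwn := hw n
  rw [comp_apply, Real.div_rpow (by positivity) hn.le, ← Real.rpow_mul hwn.le,
    Real.rpow_neg hn.le, neg_mul_neg, mul_one_div_cancel hα.ne', Real.rpow_one, div_inv_eq_mul]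

theorem tendsto_sub_succ_mul_rpow (ha : 0 < a) (hα : 0 < α) (hw : ∀ n, 0 < w n)
    (hrec : ∀ n, lsvBranch a α (w (n + 1)) = w n) :
    Tendsto (fun n : ℕ => (w n - w (n + 1)) * ((n + 1 : ℕ) : ℝ) ^ (1 / α + 1)) atTop
      (𝓝 (a * ((a * α) ^ (-(1 / α))) ^ (1 + α))) := by
  have hL : 0 < (a * α) ^ (-(1 / α)) := by positivity
  have hlim := (((Real.continuousAt_rpow_const _ (1 + α) (Or.inl hL.ne')).tendsto.comp
    ((tendsto_add_atTop_iff_nat 1).mpr (tendsto_mul_rpow_inv ha hα hw hrec))).const_mul a)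
  refine hlim.congr fun n => ?_
  have hwn := hw (n + 1)
  have hn : (0 : ℝ) < ((n + 1 : ℕ) : ℝ) := by positivity
  rw [comp_apply, ← hrec n, lsvBranch, Real.mul_rpow hwn.le (by positivity),
    ← Real.rpow_mul hn.le, Real.rpow_add hwn, Real.rpow_one]
  rw [show 1 / α * (1 + α) = 1 / α + 1 by field_simp]
  ring

end Asymptotics

theorem exists_mem_Ioc_succ_of_tendsto_zero {w : ℕ → ℝ} (hw : Tendsto w atTop (𝓝 0))
    {t : ℝ} (ht : 0 < t) (ht₀ : t ≤ w 0) : ∃ k, t ∈ Ioc (w (k + 1)) (w k) := by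
  classical
  have hex : ∃ k, w (k + 1) < t :=
    ((tendsto_add_atTop_iff_nat 1).mpr hw |>.eventually_lt_const ht).exists
  refine ⟨Nat.find hex, Nat.find_spec hex, ?_⟩
  rcases hk : Nat.find hex with _ | k
  · exact ht₀
  · exact not_lt.mp (Nat.find_min hex (hk ▸ k.lt_succ_self))

/-- `lsvPreimage α (n + 1)` is the paper's `x_n`, the `n`-th preimage of `1/2` under the left
branch. -/
noncomputable def lsvPreimage (α : ℝ) : ℕ → ℝ :=
  preimageSeq (lsvBranch (2 ^ α) α) (Ioi 0) 1

section lsvPreimage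

variable {α : ℝ}

theorem lsvPreimage_pos (hα : 0 < α) (n : ℕ) : 0 < lsvPreimage α n :=
  preimageSeq_mem (surjOn_lsvBranch (by positivity) hα) (mem_Ioi.2 one_pos) n

theorem lsvBranch_lsvPreimage_succ (hα : 0 < α) (n : ℕ) :
    lsvBranch (2 ^ α) α (lsvPreimage α (n + 1)) = lsvPreimage α n :=
  apply_preimageSeq_succ (surjOn_lsvBranch (by positivity) hα) (mem_Ioi.2 one_pos) n

theorem lsvPreimage_zero : lsvPreimage α 0 = 1 := rfl

theorem lsvPreimage_one (hα : 0 < α) : lsvPreimage α 1 = 1 / 2 := by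
  refine (strictMonoOn_lsvBranch (a := 2 ^ α) (by positivity) hα).injOn (lsvPreimage_pos hα 1).le
    (by norm_num : (0 : ℝ) ≤ 1 / 2) ?_
  rw [lsvBranch_lsvPreimage_succ hα, lsvPreimage_zero, lsvBranch,
    ← Real.mul_rpow (by norm_num) (by norm_num)]
  norm_num

theorem lsvPreimage_strictAnti (hα : 0 < α) : StrictAnti (lsvPreimage α) :=
  strictAnti_nat_of_succ_lt fun n => by
    rw [← lsvBranch_lsvPreimage_succ hα n]
    exact lt_lsvBranch (by positivity) (lsvPreimage_pos hα _)

theorem lsvPreimage_succ_le_half (hα : 0 < α) (n : ℕ) : lsvPreimage α (n + 1) ≤ 1 / 2 :=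
  lsvPreimage_one hα ▸ (lsvPreimage_strictAnti hα).antitone (Nat.le_add_left 1 n)

end lsvPreimage

noncomputable def firstReturnTime {X : Type*} (T : X → X) (Y : Set X) (y : X) : ℕ :=
  sInf {n | 1 ≤ n ∧ T^[n] y ∈ Y}

section Dynamics

variable {α : ℝ} {T : ℝ → ℝ}

theorem mapsTo_Ioc_lsvPreimage (hα : 0 < α)
    (hT : ∀ x ∈ Ioc (0 : ℝ) (1 / 2), T x = lsvBranch (2 ^ α) α x) (k : ℕ) :
    MapsTo T (Ioc (lsvPreimage α (k + 2)) (lsvPreimage α (k + 1)))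
      (Ioc (lsvPreimage α (k + 1)) (lsvPreimage α k)) := by
  rintro x ⟨hlo, hhi⟩
  have hx : 0 < x := (lsvPreimage_pos hα _).trans hlo
  have hmono := strictMonoOn_lsvBranch (a := 2 ^ α) (by positivity) hα
  rw [hT x ⟨hx, hhi.trans (lsvPreimage_succ_le_half hα k)⟩,
    ← lsvBranch_lsvPreimage_succ hα (k + 1), ← lsvBranch_lsvPreimage_succ hα k]
  exact ⟨hmono (lsvPreimage_pos hα _).le hx.le hlo,
    hmono.monotoneOn hx.le (lsvPreimage_pos hα _).le hhi⟩

theorem iterate_mem_Ioc_of_mem_Ioc_lsvPreimage (hα : 0 < α)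
    (hT : ∀ x ∈ Ioc (0 : ℝ) (1 / 2), T x = lsvBranch (2 ^ α) α x) :
    ∀ k, ∀ x ∈ Ioc (lsvPreimage α (k + 1)) (lsvPreimage α k),
      T^[k] x ∈ Ioc (1 / 2) 1 ∧ ∀ j < k, T^[j] x ≤ 1 / 2
  | 0, x, hx => ⟨by simpa [lsvPreimage_one hα, lsvPreimage_zero] using hx, by simp⟩
  | k + 1, x, hx => by
    obtain ⟨hret, hbefore⟩ :=
      iterate_mem_Ioc_of_mem_Ioc_lsvPreimage hα hT k (T x) (mapsTo_Ioc_lsvPreimage hα hT k hx)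
    refine ⟨hret, fun j hj => ?_⟩
    rcases j with _ | j
    · exact hx.2.trans (lsvPreimage_succ_le_half hα k)
    · exact hbefore j (by omega)

theorem firstReturnTime_eq_of_mem_Ioc_lsvPreimage (hα : 0 < α)
    (hT : ∀ x ∈ Ioc (0 : ℝ) (1 / 2), T x = lsvBranch (2 ^ α) α x) {k : ℕ} {y : ℝ}
    (hy : T y ∈ Ioc (lsvPreimage α (k + 1)) (lsvPreimage α k)) :
    firstReturnTime T (Ioc (1 / 2) 1) y = k + 1 := by
  obtain ⟨hret, hbefore⟩ := iterate_mem_Ioc_of_mem_Ioc_lsvPreimage hα hT k (T y) hy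
  refine IsLeast.csInf_eq ⟨⟨by omega, hret⟩, fun n ⟨hn, hnY⟩ => ?_⟩
  by_contra! hlt
  obtain ⟨j, rfl⟩ : ∃ j, n = j + 1 := ⟨n - 1, by omega⟩
  exact (hbefore j (by omega)).not_gt hnY.1

theorem setOf_firstReturnTime_eq (hα : 0 < α)
    (hT₁ : ∀ x ∈ Ioc (0 : ℝ) (1 / 2), T x = lsvBranch (2 ^ α) α x)
    (hT₂ : ∀ x ∈ Ioc (1 / 2 : ℝ) 1, T x = 2 * x - 1) {φ : ℝ → ℕ}
    (hφ : ∀ y ∈ Ioc (1 / 2 : ℝ) 1, φ y = firstReturnTime T (Ioc (1 / 2) 1) y) (k : ℕ) :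
    {y | y ∈ Ioc (1 / 2 : ℝ) 1 ∧ φ y = k + 1}
      = Ioc ((1 + lsvPreimage α (k + 1)) / 2) ((1 + lsvPreimage α k) / 2) := by
  have hw := lsvPreimage_pos hα (k + 1)
  have hw₀ : lsvPreimage α k ≤ 1 :=
    lsvPreimage_zero (α := α) ▸ (lsvPreimage_strictAnti hα).antitone k.zero_le
  ext y
  simp only [mem_ofPred_eq, mem_Ioc]
  constructor
  · rintro ⟨hy, hφy⟩
    obtain ⟨m, hm⟩ := exists_mem_Ioc_succ_of_tendsto_zero
      (tendsto_zero_of_lsvBranch_succ (by positivity) hα (lsvPreimage_pos hα)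
        (lsvBranch_lsvPreimage_succ hα))
      (show 0 < T y by rw [hT₂ y hy]; linarith [hy.1])
      (show T y ≤ lsvPreimage α 0 by rw [hT₂ y hy, lsvPreimage_zero]; linarith [hy.2])
    obtain rfl : m = k := by
      have := firstReturnTime_eq_of_mem_Ioc_lsvPreimage hα hT₁ hm
      rw [← hφ y hy] at this; omega
    rw [hT₂ y hy] at hm
    constructor <;> linarith [hm.1, hm.2]
  · rintro ⟨hlo, hhi⟩
    have hy : y ∈ Ioc (1 / 2 : ℝ) 1 := ⟨by linarith, by linarith⟩
    refine ⟨hy, (hφ y hy).trans (firstReturnTime_eq_of_mem_Ioc_lsvPreimage hα hT₁ ?_)⟩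
    rw [hT₂ y hy]
    constructor <;> linarith

end Dynamics

/-- Asymptotics of the first-return intervals: `|I_n| ∼ c / n^{β+1}` with `β = 1/α`,
i.e. `|I_n| · n^{β+1} → c` for some `c > 0`. -/
theorem return_interval_asymptotics (α : ℝ) (hα : α ∈ Set.Ioo (0:ℝ) 1) (T : ℝ → ℝ)
    (h1 : ∀ x ∈ Set.Ioc (0:ℝ) (1/2), T x = x * (1 + 2 ^ α * x ^ α))
    (h2 : ∀ x ∈ Set.Ioc (1/2:ℝ) 1, T x = 2 * x - 1)
    (φ : ℝ → ℕ)
    (hφ : ∀ y ∈ Set.Ioc (1/2:ℝ) 1,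
      φ y = sInf {n : ℕ | 1 ≤ n ∧ T^[n] y ∈ Set.Ioc (1/2:ℝ) 1}) :
    ∃ c : ℝ, 0 < c ∧
      Filter.Tendsto
        (fun n : ℕ => (volume {y : ℝ | y ∈ Set.Ioc (1/2:ℝ) 1 ∧ φ y = n}).toReal *
          (n : ℝ) ^ (1/α + 1)) Filter.atTop (nhds c) := by
  have hα₀ : 0 < α := hα.1
  have ha : (0 : ℝ) < 2 ^ α := by positivity
  refine ⟨2 ^ α * ((2 ^ α * α) ^ (-(1 / α))) ^ (1 + α) / 2, by positivity, ?_⟩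
  rw [← tendsto_add_atTop_iff_nat 1]
  refine ((tendsto_sub_succ_mul_rpow ha hα₀ (lsvPreimage_pos hα₀)
    (lsvBranch_lsvPreimage_succ hα₀)).div_const 2).congr fun k => ?_
  have hgap := (lsvPreimage_strictAnti hα₀ (Nat.lt_succ_self k)).le
  rw [Nat.cast_succ, setOf_firstReturnTime_eq hα₀ h1 h2 hφ, Real.volume_Ioc,
    ENNReal.toReal_ofReal (by linarith)]
  ring
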